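/- arXiv:2303.02417 — 4 statements merged into one kernel-verified Lean document; each statement's English description precedes it below -/
import Mathlib

section
/- Let p be a prime and a : ℕ → ℂ with a(1) = 1, F(s) = Σ a(n) n^{-s} absolutely convergent for Re(s) > 1, and a(pk) arbitrary; suppose a(p^ℓ k) = a(p^ℓ)a(k) for p ∤ k and F_p(s) = Σ_{k≥0} a(p^k) p^{-ks} is nonvanishing for Re(s) > 1. Then for Re(s) > 1: Σ_{a=1}^{p-1} F(s, a/p) = (p − 1 − p·F_p(s)^{-1}) F(s), where F(s, α) = Σ_{n≥1} a(n) e^{-2πi nα} n^{-s}. -/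
/-!
Every twist `F(s, j/p)` is the L-series of `n ↦ a(n) e(-nj/p)`, so summing over `1 ≤ j < p` and
using orthogonality of the `p`-th roots of unity gives the L-series of `p·a·1_{p ∣ n} − a`. Every
`n ≥ 1` is uniquely `p^ℓ k` with `p ∤ k`, and `a` splits along this factorisation, so
`F = F_p · G` where `G` is the L-series of `a` over `p ∤ n`; hence the part of `F` over multiples
of `p` is `F − F_p⁻¹ F`.
-/

open Complex

/-- The Dirichlet series `F(s) = ∑_{n≥1} a(n) n^{-s}`. -/
noncomputable def dirSeries (a : ℕ → ℂ) (s : ℂ) : ℂ :=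
  ∑' n : ℕ, a (n + 1) * ((n + 1 : ℕ) : ℂ) ^ (-s)

/-- The local factor `F_p(s) = ∑_{k≥0} a(p^k) p^{-ks}`. -/
noncomputable def localFactor (a : ℕ → ℂ) (p : ℕ) (s : ℂ) : ℂ :=
  ∑' k : ℕ, a (p ^ k) * ((p ^ k : ℕ) : ℂ) ^ (-s)

/-- The linear twist `F(s,α) = ∑_{n≥1} a(n) e(-nα) n^{-s}`. -/
noncomputable def linearTwist (a : ℕ → ℂ) (α : ℝ) (s : ℂ) : ℂ :=
  ∑' n : ℕ, a (n + 1) *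
    Complex.exp (-(2 * Real.pi * Complex.I * ((n + 1 : ℕ) : ℂ)) * (α : ℂ)) *
    ((n + 1 : ℕ) : ℂ) ^ (-s)

open LSeries

theorem IsPrimitiveRoot.geom_sum_pow_eq_ite {R : Type*} [CommRing R] [IsDomain R] {ζ : R}
    {k : ℕ} (hζ : IsPrimitiveRoot ζ k) (m : ℕ) :
    ∑ j ∈ Finset.range k, (ζ ^ m) ^ j = if k ∣ m then (k : R) else 0 := by
  split_ifs with hkm
  · simp [(hζ.pow_eq_one_iff_dvd m).mpr hkm]
  · have hne : ζ ^ m ≠ 1 := fun h => hkm ((hζ.pow_eq_one_iff_dvd m).mp h)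
    refine eq_zero_of_ne_zero_of_mul_left_eq_zero (sub_ne_zero_of_ne hne.symm) ?_
    rw [mul_neg_geom_sum, ← pow_mul, mul_comm, pow_mul, hζ.pow_eq_one, one_pow, sub_self]

theorem sum_Icc_exp_neg_two_pi_I_mul_div {p : ℕ} (hp : p ≠ 0) (n : ℕ) :
    ∑ j ∈ Finset.Icc 1 (p - 1), exp (-(2 * Real.pi * I * n) * ((j / p : ℝ) : ℂ)) =
      if p ∣ n then (p : ℂ) - 1 else -1 := by
  have hξ : IsPrimitiveRoot (exp (2 * Real.pi * I / p))⁻¹ p := (isPrimitiveRoot_exp p hp).inv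
  have hterm : ∀ j : ℕ, exp (-(2 * Real.pi * I * n) * ((j / p : ℝ) : ℂ)) =
      ((exp (2 * Real.pi * I / p))⁻¹ ^ n) ^ j := by
    intro j
    rw [← exp_neg, ← exp_nat_mul, ← exp_nat_mul]
    congr 1
    push_cast
    ring
  have hrange := hξ.geom_sum_pow_eq_ite n
  rw [Finset.sum_range_eq_add_Ico _ (Nat.pos_of_ne_zero hp), pow_zero,
    ← Finset.Icc_sub_one_right_eq_Ico_of_not_isMin (by simpa using hp)] at hrange
  simp only [hterm]
  split_ifs at hrange ⊢ <;> linear_combination hrange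

theorem LSeries_eq_tsum_succ (f : ℕ → ℂ) (s : ℂ) :
    LSeries f s = ∑' n : ℕ, f (n + 1) * ((n + 1 : ℕ) : ℂ) ^ (-s) := by
  have hsupp : Function.support (term f s) ⊆ Set.range Nat.succ := fun n hn =>
    Nat.exists_eq_succ_of_ne_zero (by rintro rfl; exact hn (term_zero f s)) |>.imp fun _ h => h.symm
  rw [LSeries, ← Nat.succ_injective.tsum_eq hsupp]
  refine tsum_congr fun n => ?_
  rw [term_of_ne_zero n.succ_ne_zero, cpow_neg, div_eq_mul_inv]

theorem dirSeries_eq_LSeries (a : ℕ → ℂ) (s : ℂ) : dirSeries a s = LSeries a s :=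
  (LSeries_eq_tsum_succ a s).symm

noncomputable def linearTwistCoeff (a : ℕ → ℂ) (α : ℝ) (n : ℕ) : ℂ :=
  a n * exp (-(2 * Real.pi * I * n) * α)

theorem linearTwist_eq_LSeries (a : ℕ → ℂ) (α : ℝ) (s : ℂ) :
    linearTwist a α s = LSeries (linearTwistCoeff a α) s := by
  rw [LSeries_eq_tsum_succ]
  rfl

theorem localFactor_eq_tsum_term {p : ℕ} (hp : p ≠ 0) (a : ℕ → ℂ) (s : ℂ) :
    localFactor a p s = ∑' k : ℕ, term a s (p ^ k) := by
  refine tsum_congr fun k => ?_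
  rw [term_of_ne_zero (pow_ne_zero k hp), cpow_neg, div_eq_mul_inv]

theorem LSeriesSummable_of_summable_norm_div_rpow {a : ℕ → ℂ} {s : ℂ}
    (h : Summable fun n : ℕ => ‖a (n + 1)‖ / ((n + 1 : ℕ) : ℝ) ^ s.re) :
    LSeriesSummable a s := by
  refine summable_norm_iff.mp <| (summable_nat_add_iff 1).mp <| h.congr fun n => ?_
  rw [norm_term_eq, if_neg n.succ_ne_zero]

theorem LSeriesSummable.of_norm_le {f g : ℕ → ℂ} {s : ℂ} (hg : LSeriesSummable g s)
    (h : ∀ n, ‖f n‖ ≤ ‖g n‖) : LSeriesSummable f s :=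
  Summable.of_norm_bounded (summable_norm_iff.mpr hg) fun n => norm_term_le s (h n)

theorem LSeriesSummable.indicator {f : ℕ → ℂ} {s : ℂ} (hf : LSeriesSummable f s) (S : Set ℕ) :
    LSeriesSummable (S.indicator f) s :=
  hf.of_norm_le fun n => norm_indicator_le_norm_self f n

theorem LSeries.term_indicator (S : Set ℕ) (f : ℕ → ℂ) (s : ℂ) :
    term (S.indicator f) s = S.indicator (term f s) := by
  ext n
  by_cases hS : n ∈ S <;> simp [term, hS]

theorem LSeries_indicator (S : Set ℕ) (f : ℕ → ℂ) (s : ℂ) :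
    LSeries (S.indicator f) s = ∑' n : S, term f s n := by
  rw [LSeries, term_indicator, tsum_subtype]

theorem LSeries_eq_add_indicator_compl {f : ℕ → ℂ} {s : ℂ} (hf : LSeriesSummable f s)
    (S : Set ℕ) : LSeries f s = LSeries (S.indicator f) s + LSeries (Sᶜ.indicator f) s := by
  rw [← LSeries_add (hf.indicator S) (hf.indicator Sᶜ), Set.indicator_self_add_compl]

theorem padicValNat_pow_mul_of_not_dvd {p k : ℕ} [hp : Fact p.Prime] (ℓ : ℕ) (hk : ¬ p ∣ k) :
    padicValNat p (p ^ ℓ * k) = ℓ := by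
  have hk0 : k ≠ 0 := by rintro rfl; exact hk (dvd_zero p)
  rw [padicValNat.mul (pow_ne_zero ℓ hp.out.ne_zero) hk0, padicValNat.prime_pow,
    padicValNat.eq_zero_of_not_dvd hk, add_zero]

theorem Nat.Prime.injective_pow_mul {p : ℕ} (hp : p.Prime) :
    Function.Injective fun z : ℕ × ({n : ℕ | p ∣ n}ᶜ : Set ℕ) => p ^ z.1 * z.2 := by
  have : Fact p.Prime := ⟨hp⟩
  rintro ⟨ℓ₁, k₁, hk₁ : ¬ p ∣ k₁⟩ ⟨ℓ₂, k₂, hk₂ : ¬ p ∣ k₂⟩ (h : p ^ ℓ₁ * k₁ = p ^ ℓ₂ * k₂)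
  have hℓ : ℓ₁ = ℓ₂ := by
    rw [← padicValNat_pow_mul_of_not_dvd ℓ₁ hk₁, h, padicValNat_pow_mul_of_not_dvd ℓ₂ hk₂]
  subst hℓ
  simpa using Nat.eq_of_mul_eq_mul_left (pow_pos hp.pos _) h

theorem Nat.Prime.support_subset_range_pow_mul {M : Type*} [Zero M] {p : ℕ} (hp : p.Prime)
    {f : ℕ → M} (hf : f 0 = 0) :
    Function.support f ⊆ Set.range fun z : ℕ × ({n : ℕ | p ∣ n}ᶜ : Set ℕ) => p ^ z.1 * z.2 := by
  intro n hn
  have hn0 : n ≠ 0 := by rintro rfl; exact hn hf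
  obtain ⟨ℓ, k, hk, rfl⟩ := Nat.exists_eq_pow_mul_and_not_dvd hn0 p hp.ne_one
  exact ⟨(ℓ, ⟨k, hk⟩), rfl⟩

theorem LSeries.term_pow_mul {p : ℕ} (hp : p ≠ 0) {a : ℕ → ℂ}
    (hmult : ∀ ℓ k : ℕ, ¬ p ∣ k → a (p ^ ℓ * k) = a (p ^ ℓ) * a k) (s : ℂ) (ℓ : ℕ) {k : ℕ}
    (hk : ¬ p ∣ k) : term a s (p ^ ℓ * k) = term a s (p ^ ℓ) * term a s k := by
  have hk0 : k ≠ 0 := by rintro rfl; exact hk (dvd_zero p)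
  rw [term_of_ne_zero (mul_ne_zero (pow_ne_zero ℓ hp) hk0), term_of_ne_zero (pow_ne_zero ℓ hp),
    term_of_ne_zero hk0, hmult ℓ k hk, Nat.cast_mul, natCast_mul_natCast_cpow, mul_div_mul_comm]

theorem LSeries_eq_localFactor_mul {p : ℕ} (hp : p.Prime) {a : ℕ → ℂ} {s : ℂ}
    (hmult : ∀ ℓ k : ℕ, ¬ p ∣ k → a (p ^ ℓ * k) = a (p ^ ℓ) * a k) (ha : LSeriesSummable a s) :
    LSeries a s = localFactor a p s * LSeries ({n | p ∣ n}ᶜ.indicator a) s := by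
  have hnorm : Summable fun n => ‖term a s n‖ := summable_norm_iff.mpr ha
  rw [localFactor_eq_tsum_term hp.ne_zero, LSeries_indicator,
    tsum_mul_tsum_of_summable_norm (hnorm.comp_injective (Nat.pow_right_injective hp.two_le))
      (hnorm.subtype _), LSeries,
    ← hp.injective_pow_mul.tsum_eq (hp.support_subset_range_pow_mul (term_zero a s))]
  exact tsum_congr fun z => term_pow_mul hp.ne_zero hmult s z.1 z.2.2

theorem norm_linearTwistCoeff (a : ℕ → ℂ) (α : ℝ) (n : ℕ) :
    ‖linearTwistCoeff a α n‖ = ‖a n‖ := by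
  rw [linearTwistCoeff, norm_mul, norm_exp,
    show (-(2 * Real.pi * I * n) * α).re = 0 by simp, Real.exp_zero, mul_one]

theorem LSeriesSummable.linearTwistCoeff {a : ℕ → ℂ} {s : ℂ} (ha : LSeriesSummable a s)
    (α : ℝ) : LSeriesSummable (linearTwistCoeff a α) s :=
  ha.of_norm_le fun n => (norm_linearTwistCoeff a α n).le

theorem sum_Icc_linearTwistCoeff {p : ℕ} (hp : p ≠ 0) (a : ℕ → ℂ) :
    ∑ j ∈ Finset.Icc 1 (p - 1), linearTwistCoeff a (j / p) =
      (p : ℂ) • {n | p ∣ n}.indicator a - a := by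
  ext n
  simp only [Finset.sum_apply, linearTwistCoeff]
  rw [← Finset.mul_sum, sum_Icc_exp_neg_two_pi_I_mul_div hp]
  by_cases h : p ∣ n <;> simp [h, mul_sub, mul_comm]

theorem sum_linear_twists_eq_general (p : ℕ) (hp : p.Prime) (a : ℕ → ℂ)
    (habs : ∀ σ : ℝ, 1 < σ → Summable fun n : ℕ => ‖a (n + 1)‖ / ((n + 1 : ℕ) : ℝ) ^ σ)
    (hmult : ∀ ℓ k : ℕ, ¬ p ∣ k → a (p ^ ℓ * k) = a (p ^ ℓ) * a k)
    (hFp : ∀ s : ℂ, 1 < s.re → localFactor a p s ≠ 0) :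
    ∀ s : ℂ, 1 < s.re →
      (∑ j ∈ Finset.Icc 1 (p - 1), linearTwist a ((j : ℝ) / (p : ℝ)) s) =
        ((p : ℂ) - 1 - (p : ℂ) * (localFactor a p s)⁻¹) * dirSeries a s := by
  intro s hs
  have ha : LSeriesSummable a s := LSeriesSummable_of_summable_norm_div_rpow (habs s.re hs)
  have htwists : ∑ j ∈ Finset.Icc 1 (p - 1), linearTwist a ((j : ℝ) / (p : ℝ)) s =
      p * LSeries ({n | p ∣ n}.indicator a) s - LSeries a s := by
    simp_rw [linearTwist_eq_LSeries]
    rw [← LSeries_sum fun j _ => ha.linearTwistCoeff _,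
      sum_Icc_linearTwistCoeff hp.ne_zero, LSeries_sub ((ha.indicator _).smul _) ha,
      LSeries_smul]
  have hsplit := LSeries_eq_add_indicator_compl ha {n | p ∣ n}
  have hcompl : (localFactor a p s)⁻¹ * LSeries a s = LSeries ({n | p ∣ n}ᶜ.indicator a) s := by
    rw [LSeries_eq_localFactor_mul hp hmult ha, inv_mul_cancel_left₀ (hFp s hs)]
  rw [htwists, dirSeries_eq_LSeries]
  linear_combination (p : ℂ) * hcompl - (p : ℂ) * hsplit

/-- For a function splitting at the prime `p`,
`∑_{a=1}^{p-1} F(s, a/p) = (p − 1 − p·F_p(s)^{-1}) F(s)` for `Re(s) > 1`. -/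
theorem sum_linear_twists_eq (p : ℕ) (hp : p.Prime) (a : ℕ → ℂ) (ha1 : a 1 = 1)
    (habs : ∀ σ : ℝ, 1 < σ → Summable fun n : ℕ => ‖a (n + 1)‖ / ((n + 1 : ℕ) : ℝ) ^ σ)
    (hmult : ∀ ℓ k : ℕ, ¬ p ∣ k → a (p ^ ℓ * k) = a (p ^ ℓ) * a k)
    (hFp : ∀ s : ℂ, 1 < s.re → localFactor a p s ≠ 0) :
    ∀ s : ℂ, 1 < s.re →
      (∑ j ∈ Finset.Icc 1 (p - 1), linearTwist a ((j : ℝ) / (p : ℝ)) s) =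
        ((p : ℂ) - 1 - (p : ℂ) * (localFactor a p s)⁻¹) * dirSeries a s :=
  sum_linear_twists_eq_general p hp a habs hmult hFp
end

section
/- Let a < b be fixed reals, B, C > 0, and let Q_ν : ℂ → ℝ (ν ≥ 0) and 𝓕 : ℂ → ℝ be nonnegative continuous functions on the strip a ≤ Im(s) ≤ b satisfying: (i) 𝓕(s) ≪ 1 for Re(s) ≥ 1; (ii) 𝓕(s) ≪ B^{|σ|} |σ|^{2|σ|+1} for σ = Re(s) ≤ 1; (iii) Q_ν(s) ≪ (C(|s|+1))^{2ν}/ν! for 0 ≤ ν ≤ min(|s|, |σ|+2); (iv) Q_ν(s) ≪ (C(|σ|+2))^{|σ|+2} for ν ≤ |σ|+2 and |s| ≤ 2⌊|σ|⌋+2. Then for σ ≤ −1 and a ≤ Im(s) ≤ b: Σ_{0 ≤ ν ≤ |σ|+2} Q_ν(s) 𝓕(s+ν) ≪ B^{|σ|} |σ|^{2|σ|+1}, with implied constant depending only on 𝓕, a, b, B, C and the implied constants in (i)–(iv). -/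
/-!
Write `m = |σ|` and `G m = B ^ m * m ^ (2 * m + 1)`. The ratio `G m / G (m - ν)` is about
`(B * m ^ 2) ^ ν`, and this factor is split between the two factors of each summand:
`Q ν s ≪ x ^ ν / ν! * (B * m ^ 2) ^ ν`, by (iii) when `ν ≤ ‖s‖` and by (iv) otherwise, and
`F (s + ν) * (B * m ^ 2) ^ ν ≪ e ^ ν * G m`, by (ii) when `ν ≤ m`, and for `m < ν ≤ m + 2`
because `F` is bounded on `0 ≤ Re s` while `(B * m ^ 2) ^ ν ≪ e ^ ν * G m`. Each summand is then
`≪ (e * x) ^ ν / ν! * G m`, and the exponential series bounds the sum by `exp (e * x) * G m`.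
-/

open Complex

theorem rpow_sub_mul_pow_le {B m : ℝ} {ν : ℕ} (hB : 0 < B) (hν : (ν : ℝ) ≤ m) :
    B ^ (m - ν) * (m - ν) ^ (2 * (m - ν) + 1) * (B * m ^ 2) ^ ν ≤
      B ^ m * m ^ (2 * m + 1) := by
  have hm : 0 ≤ m := (Nat.cast_nonneg ν).trans hν
  have hsplit : B ^ m * m ^ (2 * m + 1) =
      B ^ (m - ν) * m ^ (2 * (m - ν) + 1) * (B * m ^ 2) ^ ν := by
    rw [mul_pow, ← pow_mul, ← Real.rpow_natCast B, ← Real.rpow_natCast m,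
      mul_mul_mul_comm, ← Real.rpow_add hB,
      ← Real.rpow_add_of_nonneg hm (by linarith) (by positivity)]
    push_cast; ring_nf
  rw [hsplit]
  gcongr
  linarith

theorem rpow_mul_rpow_le_max_one {B t : ℝ} (hB : 0 < B) (ht₀ : 0 ≤ t) (ht₁ : t ≤ 1) :
    B ^ t * t ^ (2 * t + 1) ≤ max 1 B := by
  calc B ^ t * t ^ (2 * t + 1) ≤ max 1 B ^ t * 1 := by
        gcongr
        · exact le_max_right 1 B
        · exact Real.rpow_le_one ht₀ ht₁ (by linarith)
    _ ≤ max 1 B ^ (1 : ℝ) * 1 := by gcongr; exact le_max_left 1 B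
    _ = max 1 B := by simp

theorem pow_le_factorial_mul_exp {x : ℝ} (hx : 0 ≤ x) (n : ℕ) :
    x ^ n ≤ n.factorial * Real.exp x := by
  have := Real.pow_div_factorial_le_exp x hx n
  rwa [div_le_iff₀ (by positivity), mul_comm] at this

theorem mul_sq_pow_le_of_lt {B m : ℝ} {ν : ℕ} (hB : 0 < B) (hm : 1 ≤ m) (hmν : m < ν)
    (hν : (ν : ℝ) ≤ m + 2) :
    (B * m ^ 2) ^ ν ≤ 6 * max 1 B ^ 2 * Real.exp ν * (B ^ m * m ^ (2 * m + 1)) := by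
  have hBν : B ^ ν ≤ B ^ m * max 1 B ^ 2 := by
    rw [← Real.rpow_natCast, show (ν : ℝ) = m + (ν - m) by ring, Real.rpow_add hB]
    gcongr
    calc B ^ ((ν : ℝ) - m) ≤ max 1 B ^ ((ν : ℝ) - m) := by
          gcongr
          exact le_max_right 1 B
      _ ≤ max 1 B ^ ((2 : ℕ) : ℝ) := by
          gcongr
          · exact le_max_left 1 B
          · push_cast; linarith
      _ = max 1 B ^ 2 := Real.rpow_natCast _ 2
  have hm_pow : m ^ (2 * ν) ≤ m ^ (2 * m + 1) * (6 * Real.exp ν) := by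
    calc m ^ (2 * ν) = m ^ (((2 * ν : ℕ) : ℝ)) := (Real.rpow_natCast _ _).symm
      _ ≤ m ^ (2 * m + 1 + ((3 : ℕ) : ℝ)) := by
          gcongr
          push_cast; linarith
      _ = m ^ (2 * m + 1) * m ^ 3 := by
          rw [Real.rpow_add (by linarith), Real.rpow_natCast]
      _ ≤ m ^ (2 * m + 1) * (6 * Real.exp ν) := by
          gcongr
          calc m ^ 3 ≤ (Nat.factorial 3 : ℕ) * Real.exp m :=
                pow_le_factorial_mul_exp (by linarith) 3
            _ ≤ 6 * Real.exp ν := by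
              gcongr
              norm_num [Nat.factorial]
  calc (B * m ^ 2) ^ ν = B ^ ν * m ^ (2 * ν) := by rw [mul_pow, ← pow_mul]
    _ ≤ B ^ m * max 1 B ^ 2 * (m ^ (2 * m + 1) * (6 * Real.exp ν)) := by gcongr
    _ = _ := by ring

theorem factorial_le_rpow_self {u : ℝ} {ν : ℕ} (hu : 1 ≤ u) (hν : (ν : ℝ) ≤ u) :
    (ν.factorial : ℝ) ≤ u ^ u :=
  calc (ν.factorial : ℝ) ≤ (ν : ℝ) ^ ν := by exact_mod_cast Nat.factorial_le_pow ν
    _ ≤ u ^ ν := by gcongr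
    _ = u ^ (ν : ℝ) := (Real.rpow_natCast u ν).symm
    _ ≤ u ^ u := Real.rpow_le_rpow_of_exponent_le hu hν

theorem rpow_mul_factorial_le {B C m : ℝ} {ν : ℕ} (hB : 0 < B) (hC : 0 ≤ C) (hm : 1 ≤ m)
    (hmν : m ≤ ν) (hν : (ν : ℝ) ≤ m + 2) :
    (C * (m + 2)) ^ (m + 2) * ν.factorial ≤
      24 * (1 + 9 * C) ^ 2 * ((1 + 9 * C) * Real.exp 1 / B) ^ ν * (B * m ^ 2) ^ ν := by
  set w := (1 + 9 * C) * m ^ 2 with hw_def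
  have hw : 1 ≤ w := one_le_mul_of_one_le_of_one_le (by linarith) (one_le_pow₀ hm)
  have hm4 : m ^ 4 ≤ 24 * Real.exp ν := by
    calc m ^ 4 ≤ (Nat.factorial 4 : ℕ) * Real.exp m := pow_le_factorial_mul_exp (by linarith) 4
      _ ≤ 24 * Real.exp ν := by gcongr; norm_num [Nat.factorial]
  calc (C * (m + 2)) ^ (m + 2) * ν.factorial
      ≤ (C * (m + 2)) ^ (m + 2) * (m + 2) ^ (m + 2) := by
        gcongr; exact factorial_le_rpow_self (by linarith) hν
    _ = (C * (m + 2) ^ 2) ^ (m + 2) := by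
        rw [← Real.mul_rpow (by positivity) (by positivity)]; ring_nf
    _ ≤ w ^ (m + 2) := by
        have h9 : (m + 2) ^ 2 ≤ 9 * m ^ 2 := by nlinarith
        gcongr
        nlinarith [mul_le_mul_of_nonneg_left h9 hC]
    _ ≤ w ^ ((ν : ℝ) + (2 : ℕ)) := by gcongr; push_cast; linarith
    _ = w ^ ν * ((1 + 9 * C) ^ 2 * m ^ 4) := by
        rw [Real.rpow_add (by linarith), Real.rpow_natCast, Real.rpow_natCast]; ring
    _ ≤ w ^ ν * ((1 + 9 * C) ^ 2 * (24 * Real.exp ν)) := by gcongr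
    _ = _ := by
        rw [← Real.exp_one_rpow, Real.rpow_natCast, div_pow, mul_pow, mul_pow, mul_pow]
        field_simp

theorem mul_add_one_pow_two_mul_le {B C M m r : ℝ} {ν : ℕ} (hB : 0 < B) (hm : 1 ≤ m)
    (hM : 0 ≤ M) (hr₀ : 0 ≤ r) (hr : r ≤ m + M) :
    (C * (r + 1)) ^ (2 * ν) ≤ (C ^ 2 * (M + 2) ^ 2 / B) ^ ν * (B * m ^ 2) ^ ν := by
  rw [← mul_pow, pow_mul]
  gcongr
  calc (C * (r + 1)) ^ 2 = C ^ 2 * (r + 1) ^ 2 := by ring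
    _ ≤ C ^ 2 * ((M + 2) * m) ^ 2 := by gcongr; nlinarith
    _ = _ := by field_simp

theorem norm_le_abs_re_add_max_abs {a b : ℝ} {s : ℂ} (ha : a ≤ s.im) (hb : s.im ≤ b) :
    ‖s‖ ≤ |s.re| + max |a| |b| :=
  (Complex.norm_le_abs_re_add_abs_im s).trans (by gcongr; exact abs_le_max_abs_abs ha hb)

theorem natCast_le_floor_add_two {m : ℝ} (hm : 0 ≤ m) {ν : ℕ} (hν : ν < ⌊m⌋.toNat + 3) :
    (ν : ℝ) ≤ ⌊m⌋ + 2 := by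
  have := Int.toNat_of_nonneg (Int.floor_nonneg.mpr hm)
  exact_mod_cast (by omega : (ν : ℤ) ≤ ⌊m⌋ + 2)

theorem exists_coeff_le_pow_div_factorial_mul_pow {a b B C K₃ K₄ : ℝ} (hB : 0 < B) (hC : 0 < C)
    {Q : ℕ → ℂ → ℝ}
    (hQ1 : ∀ (s : ℂ) (ν : ℕ), a ≤ s.im → s.im ≤ b →
      (ν : ℝ) ≤ min (‖s‖) (|s.re| + 2) →
      Q ν s ≤ K₃ * (C * (‖s‖ + 1)) ^ (2 * ν) / (Nat.factorial ν : ℝ))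
    (hQ2 : ∀ (s : ℂ) (ν : ℕ), a ≤ s.im → s.im ≤ b → (ν : ℝ) ≤ |s.re| + 2 →
      ‖s‖ ≤ 2 * (⌊|s.re|⌋ : ℝ) + 2 →
      Q ν s ≤ K₄ * (C * (|s.re| + 2)) ^ (|s.re| + 2)) :
    ∃ KQ x : ℝ, 0 ≤ KQ ∧ 0 ≤ x ∧ ∀ (s : ℂ) (ν : ℕ), a ≤ s.im → s.im ≤ b → s.re ≤ -1 →
      (ν : ℝ) ≤ ⌊|s.re|⌋ + 2 →
      Q ν s ≤ KQ * (x ^ ν / ν.factorial) * (B * |s.re| ^ 2) ^ ν := by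
  set y₁ := C ^ 2 * (max |a| |b| + 2) ^ 2 / B
  set y₂ := (1 + 9 * C) * Real.exp 1 / B
  refine ⟨max K₃ 0 + 24 * (1 + 9 * C) ^ 2 * max K₄ 0, max y₁ y₂, by positivity,
    le_max_of_le_left (by positivity), fun s ν ha hb hs hν => ?_⟩
  set m := |s.re|
  have hm : 1 ≤ m := le_abs.mpr (Or.inr (by linarith))
  have hfl : (0 : ℝ) ≤ ⌊m⌋ := by exact_mod_cast Int.floor_nonneg.mpr (by linarith)
  have hνm : (ν : ℝ) ≤ m + 2 := hν.trans (by linarith [Int.floor_le m])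
  rcases le_or_gt (ν : ℝ) ‖s‖ with hνs | hsν
  · have hsM := norm_le_abs_re_add_max_abs ha hb
    calc Q ν s ≤ K₃ * (C * (‖s‖ + 1)) ^ (2 * ν) / ν.factorial := hQ1 s ν ha hb (le_min hνs hνm)
      _ ≤ max K₃ 0 * (y₁ ^ ν * (B * m ^ 2) ^ ν) / ν.factorial := by
          gcongr
          · exact le_max_left _ _
          · exact mul_add_one_pow_two_mul_le hB hm (by positivity) (norm_nonneg s) hsM
      _ = max K₃ 0 * (y₁ ^ ν / ν.factorial) * (B * m ^ 2) ^ ν := by ring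
      _ ≤ _ := by
          gcongr
          · exact le_add_of_nonneg_right (by positivity)
          · exact le_max_left _ _
  · have hfact : (0 : ℝ) < ν.factorial := by positivity
    calc Q ν s ≤ K₄ * (C * (m + 2)) ^ (m + 2) := hQ2 s ν ha hb hνm (by linarith)
      _ ≤ max K₄ 0 * ((C * (m + 2)) ^ (m + 2) * ν.factorial) / ν.factorial := by
          rw [mul_div_assoc, mul_div_cancel_right₀ _ hfact.ne']
          gcongr
          exact le_max_left _ _
      _ ≤ max K₄ 0 * (24 * (1 + 9 * C) ^ 2 * y₂ ^ ν * (B * m ^ 2) ^ ν) / ν.factorial := by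
          gcongr max K₄ 0 * ?_ / _
          exact rpow_mul_factorial_le hB hC.le hm ((Complex.abs_re_le_norm s).trans hsν.le) hνm
      _ = 24 * (1 + 9 * C) ^ 2 * max K₄ 0 * (y₂ ^ ν / ν.factorial) * (B * m ^ 2) ^ ν := by ring
      _ ≤ _ := by
          gcongr
          · exact le_add_of_nonneg_left (by positivity)
          · exact le_max_right _ _

theorem exists_le_of_re_nonneg {a b B K₁ K₂ : ℝ} (hB : 0 < B) {F : ℂ → ℝ}
    (hF1 : ∀ s : ℂ, a ≤ s.im → s.im ≤ b → 1 ≤ s.re → F s ≤ K₁)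
    (hF2 : ∀ s : ℂ, a ≤ s.im → s.im ≤ b → s.re ≤ 1 →
      F s ≤ K₂ * B ^ |s.re| * |s.re| ^ (2 * |s.re| + 1)) :
    ∃ K : ℝ, 0 ≤ K ∧ ∀ s : ℂ, a ≤ s.im → s.im ≤ b → 0 ≤ s.re → F s ≤ K := by
  refine ⟨max K₁ 0 + max K₂ 0 * max 1 B, by positivity, fun s ha hb hs => ?_⟩
  rcases le_total 1 s.re with h1 | h1
  · calc F s ≤ K₁ := hF1 s ha hb h1
      _ ≤ _ := le_add_of_le_of_nonneg (le_max_left _ _) (by positivity)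
  · have hF := hF2 s ha hb h1
    rw [abs_of_nonneg hs, mul_assoc] at hF
    calc F s ≤ max K₂ 0 * (B ^ s.re * s.re ^ (2 * s.re + 1)) := by
          refine hF.trans ?_
          gcongr
          exact le_max_left _ _
      _ ≤ max K₂ 0 * max 1 B := by gcongr; exact rpow_mul_rpow_le_max_one hB hs h1
      _ ≤ _ := le_add_of_nonneg_left (by positivity)

theorem exists_shift_mul_pow_le_exp_mul {a b B K₁ K₂ : ℝ} (hB : 0 < B) {F : ℂ → ℝ}
    (hF1 : ∀ s : ℂ, a ≤ s.im → s.im ≤ b → 1 ≤ s.re → F s ≤ K₁)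
    (hF2 : ∀ s : ℂ, a ≤ s.im → s.im ≤ b → s.re ≤ 1 →
      F s ≤ K₂ * B ^ |s.re| * |s.re| ^ (2 * |s.re| + 1)) :
    ∃ KF : ℝ, 0 ≤ KF ∧ ∀ (s : ℂ) (ν : ℕ), a ≤ s.im → s.im ≤ b → s.re ≤ -1 →
      (ν : ℝ) ≤ |s.re| + 2 →
      F (s + ν) * (B * |s.re| ^ 2) ^ ν ≤
        KF * Real.exp ν * (B ^ |s.re| * |s.re| ^ (2 * |s.re| + 1)) := by
  obtain ⟨K, hK, hFK⟩ := exists_le_of_re_nonneg hB hF1 hF2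
  refine ⟨max K₂ 0 + 6 * max 1 B ^ 2 * K, by positivity, fun s ν ha hb hs hν => ?_⟩
  set m := |s.re|
  have hm : 1 ≤ m := le_abs.mpr (Or.inr (by linarith))
  have hre : (s + ν).re = ν - m := by simp [m, abs_of_neg (by linarith : s.re < 0)]; ring
  have hima : a ≤ (s + ν).im := by simpa using ha
  have himb : (s + ν).im ≤ b := by simpa using hb
  rcases le_or_gt (ν : ℝ) m with hνm | hmν
  · have hF := hF2 (s + ν) hima himb (by linarith)
    rw [hre, abs_of_nonpos (by linarith), neg_sub, mul_assoc] at hF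
    calc F (s + ν) * (B * m ^ 2) ^ ν
        ≤ max K₂ 0 * (B ^ (m - ν) * (m - ν) ^ (2 * (m - ν) + 1)) * (B * m ^ 2) ^ ν := by
          gcongr
          refine hF.trans ?_
          gcongr
          exact le_max_left _ _
      _ = max K₂ 0 * (B ^ (m - ν) * (m - ν) ^ (2 * (m - ν) + 1) * (B * m ^ 2) ^ ν) := by ring
      _ ≤ max K₂ 0 * 1 * (B ^ m * m ^ (2 * m + 1)) := by
          rw [mul_one]; exact mul_le_mul_of_nonneg_left (rpow_sub_mul_pow_le hB hνm) (by positivity)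
      _ ≤ _ := by
          gcongr
          · exact le_add_of_nonneg_right (by positivity)
          · exact Real.one_le_exp (by positivity)
  · calc F (s + ν) * (B * m ^ 2) ^ ν
        ≤ K * (6 * max 1 B ^ 2 * Real.exp ν * (B ^ m * m ^ (2 * m + 1))) :=
          mul_le_mul (hFK _ hima himb (by linarith)) (mul_sq_pow_le_of_lt hB hm hmν hν)
            (by positivity) hK
      _ = 6 * max 1 B ^ 2 * K * Real.exp ν * (B ^ m * m ^ (2 * m + 1)) := by ring
      _ ≤ _ := by
          gcongr
          exact le_add_of_nonneg_left (by positivity)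

theorem convolution_growth_estimate_general
    (a b B C K₁ K₂ K₃ K₄ : ℝ) (hB : 0 < B) (hC : 0 < C)
    (Q : ℕ → ℂ → ℝ) (F : ℂ → ℝ)
    (hFnonneg : ∀ s : ℂ, 0 ≤ F s)
    (hF1 : ∀ s : ℂ, a ≤ s.im → s.im ≤ b → 1 ≤ s.re → F s ≤ K₁)
    (hF2 : ∀ s : ℂ, a ≤ s.im → s.im ≤ b → s.re ≤ 1 →
      F s ≤ K₂ * B ^ |s.re| * |s.re| ^ (2 * |s.re| + 1))
    (hQ1 : ∀ (s : ℂ) (ν : ℕ), a ≤ s.im → s.im ≤ b →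
      (ν : ℝ) ≤ min (‖s‖) (|s.re| + 2) →
      Q ν s ≤ K₃ * (C * (‖s‖ + 1)) ^ (2 * ν) / (Nat.factorial ν : ℝ))
    (hQ2 : ∀ (s : ℂ) (ν : ℕ), a ≤ s.im → s.im ≤ b → (ν : ℝ) ≤ |s.re| + 2 →
      ‖s‖ ≤ 2 * (⌊|s.re|⌋ : ℝ) + 2 →
      Q ν s ≤ K₄ * (C * (|s.re| + 2)) ^ (|s.re| + 2)) :
    ∃ K : ℝ, ∀ s : ℂ, s.re ≤ -1 → a ≤ s.im → s.im ≤ b →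
      (∑ ν ∈ Finset.range ((⌊|s.re|⌋).toNat + 3), Q ν s * F (s + (ν : ℂ))) ≤
        K * B ^ |s.re| * |s.re| ^ (2 * |s.re| + 1) := by
  obtain ⟨KQ, x, hKQ, hx, hQ⟩ := exists_coeff_le_pow_div_factorial_mul_pow hB hC hQ1 hQ2
  obtain ⟨KF, hKF, hF⟩ := exists_shift_mul_pow_le_exp_mul hB hF1 hF2
  refine ⟨KQ * KF * Real.exp (x * Real.exp 1), fun s hs ha hb => ?_⟩
  set m := |s.re|
  set G := B ^ m * m ^ (2 * m + 1)
  have hterm : ∀ ν ∈ Finset.range (⌊m⌋.toNat + 3),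
      Q ν s * F (s + ν) ≤ KQ * KF * ((x * Real.exp 1) ^ ν / ν.factorial) * G := by
    intro ν hν
    have hνfl := natCast_le_floor_add_two (abs_nonneg _) (Finset.mem_range.mp hν)
    have hνm : (ν : ℝ) ≤ m + 2 := hνfl.trans (by linarith [Int.floor_le m])
    calc Q ν s * F (s + ν) ≤ KQ * (x ^ ν / ν.factorial) * (B * m ^ 2) ^ ν * F (s + ν) := by
          gcongr
          · exact hFnonneg _
          · exact hQ s ν ha hb hs hνfl
      _ = KQ * (x ^ ν / ν.factorial) * (F (s + ν) * (B * m ^ 2) ^ ν) := by ring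
      _ ≤ KQ * (x ^ ν / ν.factorial) * (KF * Real.exp ν * G) :=
          mul_le_mul_of_nonneg_left (hF s ν ha hb hs hνm) (by positivity)
      _ = _ := by rw [mul_pow, ← Real.exp_nat_mul, mul_one]; ring
  calc ∑ ν ∈ Finset.range (⌊m⌋.toNat + 3), Q ν s * F (s + ν)
      ≤ ∑ ν ∈ Finset.range (⌊m⌋.toNat + 3),
          KQ * KF * ((x * Real.exp 1) ^ ν / ν.factorial) * G := Finset.sum_le_sum hterm
    _ = KQ * KF * (∑ ν ∈ Finset.range (⌊m⌋.toNat + 3),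
          (x * Real.exp 1) ^ ν / ν.factorial) * G := by rw [Finset.mul_sum, Finset.sum_mul]
    _ ≤ KQ * KF * Real.exp (x * Real.exp 1) * G := by
          gcongr; exact Real.sum_le_exp_of_nonneg (by positivity) _
    _ = _ := by ring

/-- Lemma 5 of the paper. Under growth conditions (i)–(iv) on the
nonnegative continuous functions `Q ν` and `F` in the horizontal strip `a ≤ Im s ≤ b`,
one has `∑_{0 ≤ ν ≤ |σ|+2} Q ν (s) F(s+ν) ≪ B^{|σ|} |σ|^{2|σ|+1}` for `σ = Re s ≤ -1`. -/
theorem convolution_growth_estimate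
    (a b B C K₁ K₂ K₃ K₄ : ℝ) (hab : a < b) (hB : 0 < B) (hC : 0 < C)
    (Q : ℕ → ℂ → ℝ) (F : ℂ → ℝ)
    (hFnonneg : ∀ s : ℂ, 0 ≤ F s) (hQnonneg : ∀ (ν : ℕ) (s : ℂ), 0 ≤ Q ν s)
    (hFcont : ContinuousOn F {s : ℂ | a ≤ s.im ∧ s.im ≤ b})
    (hQcont : ∀ ν : ℕ, ContinuousOn (Q ν) {s : ℂ | a ≤ s.im ∧ s.im ≤ b})
    (hF1 : ∀ s : ℂ, a ≤ s.im → s.im ≤ b → 1 ≤ s.re → F s ≤ K₁)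
    (hF2 : ∀ s : ℂ, a ≤ s.im → s.im ≤ b → s.re ≤ 1 →
      F s ≤ K₂ * B ^ |s.re| * |s.re| ^ (2 * |s.re| + 1))
    (hQ1 : ∀ (s : ℂ) (ν : ℕ), a ≤ s.im → s.im ≤ b →
      (ν : ℝ) ≤ min (‖s‖) (|s.re| + 2) →
      Q ν s ≤ K₃ * (C * (‖s‖ + 1)) ^ (2 * ν) / (Nat.factorial ν : ℝ))
    (hQ2 : ∀ (s : ℂ) (ν : ℕ), a ≤ s.im → s.im ≤ b → (ν : ℝ) ≤ |s.re| + 2 →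
      ‖s‖ ≤ 2 * (⌊|s.re|⌋ : ℝ) + 2 →
      Q ν s ≤ K₄ * (C * (|s.re| + 2)) ^ (|s.re| + 2)) :
    ∃ K : ℝ, ∀ s : ℂ, s.re ≤ -1 → a ≤ s.im → s.im ≤ b →
      (∑ ν ∈ Finset.range ((⌊|s.re|⌋).toNat + 3), Q ν s * F (s + (ν : ℂ))) ≤
        K * B ^ |s.re| * |s.re| ^ (2 * |s.re| + 1) :=
  convolution_growth_estimate_general a b B C K₁ K₂ K₃ K₄ hB hC Q F hFnonneg hF1 hF2 hQ1 hQ2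
end

section
/- Let a : ℕ → ℂ with a(1) = 1 satisfy the Ramanujan bound a(n) ≪_ε n^ε for every ε > 0, and suppose the local factor F_p(s) = Σ_{k≥0} a(p^k) p^{-ks} satisfies F_p(s)^{-1} = (1 − α p^{-s})(1 − β p^{-s}) for some complex numbers α, β (i.e., F_p(s) = (1 − α p^{-s})^{-1}(1 − β p^{-s})^{-1} as formal Dirichlet series, so a(p^k) = Σ_{i+j=k} α^i β^j). Then |α| ≤ 1 and |β| ≤ 1. -/
/-- Auxiliary: the root with larger norm lies in the closed unit disc. -/
lemma ramanujan_aux (p : ℕ) (hp : p.Prime)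
    (a : ℕ → ℂ) (ha1 : a 1 = 1)
    (hram : ∀ ε : ℝ, 0 < ε → ∃ K : ℝ, ∀ n : ℕ, 1 ≤ n → ‖a n‖ ≤ K * (n : ℝ) ^ ε)
    (γ δ : ℂ) (hδγ : ‖δ‖ ≤ ‖γ‖)
    (hloc : ∀ k : ℕ, a (p ^ k) = ∑ i ∈ Finset.range (k + 1), γ ^ i * δ ^ (k - i)) :
    ‖γ‖ ≤ 1 := by
  by_contra h
  push_neg at h
  set g : ℝ := ‖γ‖ with hgdef
  have hg0 : 0 ≤ g := norm_nonneg _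
  have hg1 : 1 < g := h
  have hp1 : 1 < (p : ℝ) := by exact_mod_cast hp.one_lt
  have hsq1 : 1 < Real.sqrt g := by
    rw [Real.lt_sqrt (by norm_num)]
    simpa using hg1
  have hsq0 : 0 < Real.sqrt g := lt_trans one_pos hsq1
  set ε := Real.logb p (Real.sqrt g) with hεdef
  have hε : 0 < ε := Real.logb_pos hp1 hsq1
  obtain ⟨K, hK⟩ := hram ε hε
  have hq : (p : ℝ) ^ ε = Real.sqrt g :=
    Real.rpow_logb (by positivity) (ne_of_gt hp1) hsq0
  -- cast computation for p^k
  have hcast : ∀ k : ℕ, ((p ^ k : ℕ) : ℝ) ^ ε = (Real.sqrt g) ^ k := by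
    intro k
    rw [Nat.cast_pow, ← Real.rpow_natCast (p : ℝ) k, ← Real.rpow_mul (by positivity),
      mul_comm, Real.rpow_mul (by positivity), hq, Real.rpow_natCast]
  have hbnd : ∀ k : ℕ, ‖a (p ^ k)‖ ≤ K * (Real.sqrt g) ^ k := by
    intro k
    have := hK (p ^ k) (Nat.one_le_pow _ _ hp.pos)
    rwa [hcast k] at this
  have hK1 : 1 ≤ K := by
    have := hK 1 le_rfl
    simpa [ha1] using this
  -- recurrence: γ^(k+1) = a(p^(k+1)) - δ * a(p^k)
  have hrec : ∀ k : ℕ, γ ^ (k + 1) = a (p ^ (k + 1)) - δ * a (p ^ k) := by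
    intro k
    rw [hloc (k + 1), hloc k, Finset.sum_range_succ, Finset.mul_sum]
    have hterm : ∀ i ∈ Finset.range (k + 1),
        γ ^ i * δ ^ (k + 1 - i) = δ * (γ ^ i * δ ^ (k - i)) := by
      intro i hi
      have hik : i ≤ k := Nat.lt_succ_iff.mp (Finset.mem_range.mp hi)
      rw [Nat.succ_sub hik, pow_succ]
      ring
    rw [Finset.sum_congr rfl hterm]
    simp
  -- the key growth bound
  have hgrow : ∀ k : ℕ, g ^ (k + 1) ≤ K * (1 + g) * (Real.sqrt g) ^ (k + 1) := by
    intro k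
    have h1 : g ^ (k + 1) ≤ ‖a (p ^ (k + 1))‖ + ‖δ‖ * ‖a (p ^ k)‖ := by
      calc g ^ (k + 1) = ‖γ ^ (k + 1)‖ := (norm_pow γ (k + 1)).symm
        _ = ‖a (p ^ (k + 1)) - δ * a (p ^ k)‖ := by rw [hrec k]
        _ ≤ ‖a (p ^ (k + 1))‖ + ‖δ * a (p ^ k)‖ := norm_sub_le _ _
        _ = ‖a (p ^ (k + 1))‖ + ‖δ‖ * ‖a (p ^ k)‖ := by rw [norm_mul]
    have h2 : ‖δ‖ * ‖a (p ^ k)‖ ≤ g * (K * (Real.sqrt g) ^ (k + 1)) := by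
      have hK0 : 0 ≤ K := le_trans zero_le_one hK1
      have : ‖a (p ^ k)‖ ≤ K * (Real.sqrt g) ^ (k + 1) := by
        refine (hbnd k).trans ?_
        have : (Real.sqrt g) ^ k ≤ (Real.sqrt g) ^ (k + 1) :=
          pow_le_pow_right₀ (le_of_lt hsq1) (Nat.le_succ k)
        exact mul_le_mul_of_nonneg_left this hK0
      exact mul_le_mul hδγ this (norm_nonneg _) hg0
    calc g ^ (k + 1) ≤ ‖a (p ^ (k + 1))‖ + ‖δ‖ * ‖a (p ^ k)‖ := h1
      _ ≤ K * (Real.sqrt g) ^ (k + 1) + g * (K * (Real.sqrt g) ^ (k + 1)) := by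
          exact add_le_add (hbnd (k + 1)) h2
      _ = K * (1 + g) * (Real.sqrt g) ^ (k + 1) := by ring
  -- derive: (sqrt g)^(k+1) ≤ K * (1 + g) for all k
  have hfin : ∀ k : ℕ, (Real.sqrt g) ^ (k + 1) ≤ K * (1 + g) := by
    intro k
    have hgg : g ^ (k + 1) = (Real.sqrt g) ^ (k + 1) * (Real.sqrt g) ^ (k + 1) := by
      rw [← mul_pow, Real.mul_self_sqrt hg0]
    have := hgrow k
    rw [hgg] at this
    exact le_of_mul_le_mul_right this (pow_pos hsq0 (k + 1))
  obtain ⟨m, hm⟩ := pow_unbounded_of_one_lt (K * (1 + g)) hsq1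
  have : (Real.sqrt g) ^ m ≤ (Real.sqrt g) ^ (m + 1) :=
    pow_le_pow_right₀ (le_of_lt hsq1) (Nat.le_succ m)
  exact absurd (hfin m) (not_le.mpr (lt_of_lt_of_le hm this))

/-- If the Dirichlet coefficients satisfy the Ramanujan bound
`a(n) ≪_ε n^ε` and the local factor at `p` has inverse
`(1 − α p^{-s})(1 − β p^{-s})`, i.e. `a(p^k) = ∑_{i+j=k} α^i β^j`, then
`|α| ≤ 1` and `|β| ≤ 1`. -/
theorem ramanujan_implies_unit_roots (p : ℕ) (hp : p.Prime)
    (a : ℕ → ℂ) (ha1 : a 1 = 1)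
    (hram : ∀ ε : ℝ, 0 < ε → ∃ K : ℝ, ∀ n : ℕ, 1 ≤ n → ‖a n‖ ≤ K * (n : ℝ) ^ ε)
    (α β : ℂ)
    (hloc : ∀ k : ℕ, a (p ^ k) = ∑ i ∈ Finset.range (k + 1), α ^ i * β ^ (k - i)) :
    ‖α‖ ≤ 1 ∧ ‖β‖ ≤ 1 := by
  have hloc' : ∀ k : ℕ, a (p ^ k) = ∑ i ∈ Finset.range (k + 1), β ^ i * α ^ (k - i) := by
    intro k
    rw [hloc k, ← Finset.sum_range_reflect]
    refine Finset.sum_congr rfl fun i hi => ?_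
    have hik : i ≤ k := Nat.lt_succ_iff.mp (Finset.mem_range.mp hi)
    have : k + 1 - 1 - i = k - i := by omega
    rw [this, Nat.sub_sub_self hik]
    ring
  rcases le_total ‖β‖ ‖α‖ with h | h
  · have hα := ramanujan_aux p hp a ha1 hram α β h hloc
    exact ⟨hα, h.trans hα⟩
  · have hβ := ramanujan_aux p hp a ha1 hram β α h hloc'
    exact ⟨h.trans hβ, hβ⟩
end

section
/- Let p be a prime, m ≥ 1, and a : ℕ → ℂ with a(1) = 1. Define W_{m,p}(X) = Σ_{ℓ=0}^{m-2} a(p^ℓ) X^ℓ + (p/(p-1)) a(p^{m-1}) X^{m-1}. Suppose F_p(s) = N_p(p^{-s})/D_p(p^{-s}) with N_p, D_p coprime polynomials in ℂ[X] with N_p(0) = D_p(0) = 1, and suppose W_{m,p}(p^{-s}) F_p(s)^{-1} = W_{m,p}(p^{-s}) D_p(p^{-s})/N_p(p^{-s}) is an entire function of s. Then N_p divides W_{m,p} in ℂ[X]; in particular deg N_p ≤ m − 1, and if m = 1 then N_p is constant equal to 1, so F_p(s)^{-1} = D_p(p^{-s}) is a polynomial in p^{-s}. -/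
open Complex Polynomial

/-- The polynomial `W_{m,p}(X) = ∑_{ℓ=0}^{m-2} a(p^ℓ) X^ℓ + (p/(p-1)) a(p^{m-1}) X^{m-1}`. -/
noncomputable def WpolyP (a : ℕ → ℂ) (p m : ℕ) : Polynomial ℂ :=
  (∑ ℓ ∈ Finset.range (m - 1), Polynomial.C (a (p ^ ℓ)) * Polynomial.X ^ ℓ) +
    Polynomial.C (((p : ℂ) / ((p : ℂ) - 1)) * a (p ^ (m - 1))) * Polynomial.X ^ (m - 1)

/-- A continuous function vanishing off a countable set vanishes everywhere. -/
lemma vanish_of_countable (h : ℂ → ℂ) (hc : Continuous h) {S : Set ℂ}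
    (hS : S.Countable) (h0 : ∀ s ∉ S, h s = 0) : ∀ s, h s = 0 := by
  have hd : Dense Sᶜ := hS.dense_compl ℂ
  have := hc.ext_on hd continuous_const (fun x hx => h0 x hx)
  exact fun s => congrFun this s

lemma countable_fiber (p : ℕ) (hp : 2 ≤ p) (z : ℂ) :
    {s : ℂ | (p : ℂ) ^ (-s) = z}.Countable := by
  have hp0 : (p : ℂ) ≠ 0 := by
    exact Nat.cast_ne_zero.mpr (by omega)
  have hp1 : (p : ℂ) ≠ 1 := by
    intro h; have : p = 1 := by exact_mod_cast h
    omega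
  have hlog : Complex.log p ≠ 0 := by
    intro h
    have := Complex.exp_log hp0
    rw [h, Complex.exp_zero] at this
    exact hp1 this.symm
  by_cases hne : {s : ℂ | (p : ℂ) ^ (-s) = z}.Nonempty
  · obtain ⟨s₀, hs₀⟩ := hne
    apply Set.Countable.mono _
      (Set.countable_range (fun k : ℤ => s₀ - (k : ℂ) * (2 * Real.pi * I) / Complex.log p))
    intro s hs
    simp only [Set.mem_setOf_eq] at hs hs₀
    rw [Complex.cpow_def_of_ne_zero hp0] at hs hs₀
    have hexp : Complex.exp (Complex.log p * (-s)) = Complex.exp (Complex.log p * (-s₀)) := by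
      rw [hs, hs₀]
    rw [Complex.exp_eq_exp_iff_exists_int] at hexp
    obtain ⟨n, hn⟩ := hexp
    refine ⟨n, ?_⟩
    push_cast
    field_simp
    linear_combination hn
  · rw [Set.not_nonempty_iff_eq_empty] at hne
    rw [hne]; exact Set.countable_empty

/-- Key induction: if `g` is continuous with `g s * N(p^{-s}) = P(p^{-s})` for all `s`
and `N.coeff 0 ≠ 0`, then `N ∣ P`. -/
lemma key_dvd (p : ℕ) (hp : 2 ≤ p) :
    ∀ n (N P : Polynomial ℂ), N.natDegree ≤ n → N.coeff 0 ≠ 0 →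
      ∀ g : ℂ → ℂ, Continuous g →
      (∀ s, g s * N.eval ((p : ℂ) ^ (-s)) = P.eval ((p : ℂ) ^ (-s))) → N ∣ P := by
  have hp0 : (p : ℂ) ≠ 0 := by exact Nat.cast_ne_zero.mpr (by omega)
  have hcw : Continuous (fun s : ℂ => (p : ℂ) ^ (-s)) :=
    Continuous.const_cpow continuous_neg (Or.inl hp0)
  intro n
  induction n with
  | zero =>
    intro N P hdeg h0 g hg hfe
    have hN : N = Polynomial.C (N.coeff 0) := Polynomial.eq_C_of_natDegree_le_zero hdeg
    rw [hN]
    exact (Polynomial.isUnit_C.mpr (isUnit_iff_ne_zero.mpr h0)).dvd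
  | succ n ih =>
    intro N P hdeg h0 g hg hfe
    by_cases hd0 : N.natDegree = 0
    · rw [Polynomial.eq_C_of_natDegree_le_zero hd0.le]
      exact (Polynomial.isUnit_C.mpr (isUnit_iff_ne_zero.mpr h0)).dvd
    · have hNne : N ≠ 0 := fun h => h0 (by simp [h])
      have hdpos : 0 < N.degree := Polynomial.natDegree_pos_iff_degree_pos.mp
        (Nat.pos_of_ne_zero hd0)
      obtain ⟨z₀, hz₀⟩ := Complex.exists_root hdpos
      have hz0ne : z₀ ≠ 0 := by
        intro h
        rw [h] at hz₀
        exact h0 (by rwa [Polynomial.coeff_zero_eq_eval_zero])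
      have hlog : Complex.log p ≠ 0 := by
        intro h
        have h2 := Complex.exp_log hp0
        rw [h, Complex.exp_zero] at h2
        have : p = 1 := by exact_mod_cast h2.symm
        omega
      -- a point s₀ with p^{-s₀} = z₀
      set s₀ : ℂ := -(Complex.log z₀ / Complex.log p) with hs₀def
      have hs₀ : (p : ℂ) ^ (-s₀) = z₀ := by
        rw [Complex.cpow_def_of_ne_zero hp0, hs₀def, neg_neg,
          mul_div_cancel₀ _ hlog, Complex.exp_log hz0ne]
      have hProot : P.IsRoot z₀ := by
        have := hfe s₀
        rw [hs₀, hz₀.eq_zero] at this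
        simpa using this.symm
      obtain ⟨N₁, hN₁⟩ := Polynomial.dvd_iff_isRoot.mpr hz₀
      obtain ⟨P₁, hP₁⟩ := Polynomial.dvd_iff_isRoot.mpr hProot
      have hc : N.coeff 0 = (-z₀) * N₁.coeff 0 := by
        rw [hN₁, Polynomial.mul_coeff_zero]
        simp
      have hN₁c : N₁.coeff 0 ≠ 0 := fun h => h0 (by rw [hc, h, mul_zero])
      have hN₁ne : N₁ ≠ 0 := fun h => hN₁c (by simp [h])
      have hdeg₁ : N₁.natDegree ≤ n := by
        have : N.natDegree = 1 + N₁.natDegree := by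
          rw [hN₁, Polynomial.natDegree_mul (Polynomial.X_sub_C_ne_zero z₀) hN₁ne,
            Polynomial.natDegree_X_sub_C]
        omega
      have key : ∀ s, g s * N₁.eval ((p : ℂ) ^ (-s)) - P₁.eval ((p : ℂ) ^ (-s)) = 0 := by
        apply vanish_of_countable _ ?_ (countable_fiber p hp z₀)
        · intro s hs
          simp only [Set.mem_setOf_eq] at hs
          have hw : (p : ℂ) ^ (-s) - z₀ ≠ 0 := sub_ne_zero.mpr hs
          have h1 := hfe s
          rw [hN₁, hP₁] at h1
          simp only [Polynomial.eval_mul, Polynomial.eval_sub, Polynomial.eval_X,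
            Polynomial.eval_C] at h1
          have h2 : ((p : ℂ) ^ (-s) - z₀) * (g s * N₁.eval ((p : ℂ) ^ (-s))
              - P₁.eval ((p : ℂ) ^ (-s))) = 0 := by ring_nf; linear_combination h1
          rcases mul_eq_zero.mp h2 with h | h
          · exact absurd h hw
          · exact h
        · fun_prop
      have hdvd₁ : N₁ ∣ P₁ := by
        apply ih N₁ P₁ hdeg₁ hN₁c g hg
        exact fun s => sub_eq_zero.mp (key s)
      rw [hN₁, hP₁]
      exact mul_dvd_mul_left _ hdvd₁

/-- If `F_p(s) = N(p^{-s})/D(p^{-s})` with `N, D` coprime and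
normalized, and `W_{m,p}(p^{-s}) D(p^{-s})/N(p^{-s})` extends to an entire function,
then `N ∣ W_{m,p}`, so `deg N ≤ m − 1`; and if `m = 1` then `N = 1` and
`F_p(s)^{-1} = D(p^{-s})` is a polynomial in `p^{-s}`. -/
theorem numerator_divides_W (p m : ℕ) (hp : p.Prime) (hm : 1 ≤ m)
    (a : ℕ → ℂ) (ha1 : a 1 = 1)
    (N D : Polynomial ℂ) (hcop : IsCoprime N D)
    (hN0 : N.coeff 0 = 1) (hD0 : D.coeff 0 = 1)
    (Fp : ℂ → ℂ)
    (hFp : ∀ s : ℂ, Fp s = N.eval ((p : ℂ) ^ (-s)) / D.eval ((p : ℂ) ^ (-s)))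
    (g : ℂ → ℂ) (hg : Differentiable ℂ g)
    (hge : ∀ s : ℂ, N.eval ((p : ℂ) ^ (-s)) ≠ 0 →
      g s = (WpolyP a p m).eval ((p : ℂ) ^ (-s)) * D.eval ((p : ℂ) ^ (-s)) /
        N.eval ((p : ℂ) ^ (-s))) :
    N ∣ WpolyP a p m ∧ N.natDegree ≤ m - 1 ∧
      (m = 1 → N = 1 ∧ ∀ s : ℂ, (Fp s)⁻¹ = D.eval ((p : ℂ) ^ (-s))) := by
  have hp2 : 2 ≤ p := hp.two_le
  have hp0 : (p : ℂ) ≠ 0 := by exact Nat.cast_ne_zero.mpr (by omega)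
  set W : Polynomial ℂ := WpolyP a p m with hW
  have hNne : N ≠ 0 := fun h => by simp [h] at hN0
  -- the functional identity everywhere
  have hkey : ∀ s, g s * N.eval ((p : ℂ) ^ (-s)) = (W * D).eval ((p : ℂ) ^ (-s)) := by
    have hS : {s : ℂ | N.eval ((p : ℂ) ^ (-s)) = 0}.Countable := by
      apply Set.Countable.mono _
        (Set.Countable.biUnion (N.roots.toFinset : Set ℂ).to_countable
          (fun z _ => countable_fiber p hp2 z))
      intro s hs
      simp only [Set.mem_setOf_eq] at hs
      exact Set.mem_biUnion (by
        simp [Multiset.mem_toFinset, Polynomial.mem_roots, hNne, hs]) rfl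
    have hcw : Continuous (fun s : ℂ => (p : ℂ) ^ (-s)) :=
      Continuous.const_cpow continuous_neg (Or.inl hp0)
    have hcont : Continuous
        (fun s => g s * N.eval ((p : ℂ) ^ (-s)) - (W * D).eval ((p : ℂ) ^ (-s))) :=
      (hg.continuous.mul ((N.continuous).comp hcw)).sub (((W * D).continuous).comp hcw)
    have h0' : ∀ s ∉ {s : ℂ | N.eval ((p : ℂ) ^ (-s)) = 0},
        g s * N.eval ((p : ℂ) ^ (-s)) - (W * D).eval ((p : ℂ) ^ (-s)) = 0 := by
      intro s hs
      simp only [Set.mem_setOf_eq] at hs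
      rw [hge s hs, Polynomial.eval_mul, div_mul_cancel₀ _ hs, sub_self]
    have := vanish_of_countable _ hcont hS h0'
    exact fun s => sub_eq_zero.mp (this s)
  have hNdvd : N ∣ W * D :=
    key_dvd p hp2 N.natDegree N (W * D) le_rfl (by rw [hN0]; exact one_ne_zero)
      g hg.continuous hkey
  have hNW : N ∣ W := hcop.dvd_of_dvd_mul_right hNdvd
  -- coeff 0 of W is nonzero
  have hpne1 : (p : ℂ) - 1 ≠ 0 := by
    intro h
    have h1 : (p : ℂ) = 1 := sub_eq_zero.mp h
    have : p = 1 := by exact_mod_cast h1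
    omega
  have hW0 : W.coeff 0 ≠ 0 := by
    rw [hW]
    unfold WpolyP
    rcases m with _ | m
    · omega
    rcases m with _ | m
    · simp [ha1]
      exact ⟨by exact_mod_cast hp0, hpne1⟩
    · simp only [Nat.add_sub_cancel, Polynomial.coeff_add, Polynomial.finset_sum_coeff,
        Polynomial.coeff_C_mul, Polynomial.coeff_X_pow]
      rw [Finset.sum_eq_single 0]
      · simp [ha1]
      · intro b _ hb; simp [hb.symm]
      · intro h; simp at h
  have hWne : W ≠ 0 := fun h => hW0 (by simp [h])
  have hWdeg : W.natDegree ≤ m - 1 := by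
    rw [hW]
    unfold WpolyP
    apply le_trans (Polynomial.natDegree_add_le _ _)
    apply max_le
    · apply Polynomial.natDegree_sum_le_of_forall_le
      intro i hi
      exact le_trans (Polynomial.natDegree_C_mul_X_pow_le _ _)
        (by have := Finset.mem_range.mp hi; omega)
    · exact Polynomial.natDegree_C_mul_X_pow_le _ _
  have hNdeg : N.natDegree ≤ m - 1 := le_trans (Polynomial.natDegree_le_of_dvd hNW hWne) hWdeg
  refine ⟨hNW, hNdeg, fun hm1 => ?_⟩
  have hN1 : N = 1 := by
    have : N.natDegree = 0 := by omega
    rw [Polynomial.eq_C_of_natDegree_le_zero this.le, hN0, map_one]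
  refine ⟨hN1, fun s => ?_⟩
  rw [hFp s, hN1]
  simp [one_div]
end
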